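/- Let f be integrable in the generalized sense on [0,∞[. Then for every α > 0, the generalized integral is invariant under the power substitution r = u^α: gen∫₀^∞ f(r) dr = gen∫₀^∞ f(u^α) α u^{α−1} du. -/

import Mathlib

/-!
The substitution `r = u ^ α` maps `]0,1[` and `]1,∞[` onto themselves and turns `c r ^ k dr` into
`α c u ^ (α (k + 1) - 1) du`, whose regularized integral `α c / (α (k + 1))` over `]0,1[` is again
`c / (k + 1)`. So it carries admissible data `(Ω, c)` for `f` to admissible data for the
substituted function, with the same generalized integral. It remains to see that the generalized
integral does not depend on the data: two admissible data differ by a power sum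
`P u = ∑ aᵢ u ^ μᵢ` integrable on `]0,1[`, and such a sum integrates to `∑_{μᵢ ≠ -1} aᵢ / (μᵢ + 1)`.
Indeed, for the primitive `G` of `P` built from `u ^ (μ + 1) / (μ + 1)` and `log u`, `G 1` is this
value and `∫_{e^{-t}}^1 P = G 1 - G (e^{-t})`. Now `G (e^{-t})` is an exponential polynomial in `t`
with nonzero frequencies plus an affine function of `t`; since it converges as `t → ∞`, the affine
part is the constant `0`, which is therefore its limit.
-/

open MeasureTheory Set Complex Real

/-- The generalized integral of `f` over `[0,∞[` with respect to the data
`(Ω, c)` of homogeneous terms `c k * r ^ k`, `k ∈ Ω`, at `0`. -/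
noncomputable def genInt (f : ℝ → ℂ) (Ω : Finset ℂ) (c : ℂ → ℂ) : ℂ :=
  (∑ k ∈ Ω, if k = -1 then 0 else c k / (k + 1))
  + (∫ r in Ioo (0:ℝ) 1, (f r - ∑ k ∈ Ω, c k * (r : ℂ) ^ k))
  + ∫ r in Ioi (1:ℝ), f r

/-- `f` is integrable in the generalized sense with data `(Ω, c)`:
it is integrable on `]1,∞[` and, after subtracting the homogeneous terms,
integrable on `]0,1[`. -/
def GenIntegrable (f : ℝ → ℂ) (Ω : Finset ℂ) (c : ℂ → ℂ) : Prop :=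
  IntegrableOn f (Ioi 1) ∧
  IntegrableOn (fun r => f r - ∑ k ∈ Ω, c k * (r : ℂ) ^ k) (Ioo 0 1)

open Filter Topology

theorem exists_exp_mul_ofReal_ne_one {z : ℂ} (hz : z ≠ 0) : ∃ h : ℝ, cexp (z * h) ≠ 1 := by
  by_contra! hconst
  have hderiv : HasDerivAt (fun h : ℝ => cexp (z * h)) z 0 := by
    simpa using ((hasDerivAt_id (0 : ℂ)).const_mul z).cexp.comp_ofReal
  rw [show (fun h : ℝ => cexp (z * h)) = fun _ => 1 from funext hconst] at hderiv
  exact hz (hderiv.unique (hasDerivAt_const _ _))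

theorem eq_of_tendsto_sum_exp_add_affine {ι : Type*} (S : Finset ι) (ω : ι → ℂ)
    (hω : ∀ i ∈ S, ω i ≠ 0) (a : ι → ℂ) {b c L : ℂ}
    (h : Tendsto (fun t : ℝ => ∑ i ∈ S, a i * cexp (ω i * t) + b * t + c) atTop (𝓝 L)) :
    b = 0 ∧ c = L := by
  classical
  induction S using Finset.induction_on generalizing a b c L with
  | empty =>
    simp only [Finset.sum_empty, zero_add] at h
    have hb : Tendsto (fun _ : ℝ => b) atTop (𝓝 (L - L)) := by
      refine ((h.comp (tendsto_atTop_add_const_right atTop 1 tendsto_id)).sub h).congr fun t => ?_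
      push_cast [Function.comp_apply, id_eq]
      ring
    obtain rfl : b = 0 := by simpa using tendsto_nhds_unique tendsto_const_nhds hb
    simp only [zero_mul, zero_add] at h
    exact ⟨rfl, tendsto_nhds_unique tendsto_const_nhds h⟩
  | @insert i₀ S hi₀ ih =>
    obtain ⟨h₀, hE⟩ := exists_exp_mul_ofReal_ne_one (hω i₀ (Finset.mem_insert_self _ _))
    set E := cexp (ω i₀ * h₀) with hE_def
    -- Shifting `t` by `h₀` and subtracting `E` times the unshifted sum kills the frequency `ω i₀`.
    have hsum (t : ℝ) : ∑ i ∈ insert i₀ S, a i * cexp (ω i * (t + h₀))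
          - E * ∑ i ∈ insert i₀ S, a i * cexp (ω i * t)
        = ∑ i ∈ S, a i * (cexp (ω i * h₀) - E) * cexp (ω i * t) := by
      rw [Finset.mul_sum, ← Finset.sum_sub_distrib, Finset.sum_insert hi₀, mul_add,
        Complex.exp_add, ← hE_def, mul_comm E, mul_assoc, sub_self, zero_add]
      refine Finset.sum_congr rfl fun i _ => ?_
      rw [mul_add, Complex.exp_add]
      ring
    have hshift := (h.comp (tendsto_atTop_add_const_right atTop h₀ tendsto_id)).sub
      (h.const_mul E)
    obtain ⟨hb, hc⟩ := ih (fun i hi => hω i (Finset.mem_insert_of_mem hi))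
      (fun i => a i * (cexp (ω i * h₀) - E)) (b := (1 - E) * b) (c := (1 - E) * c + b * h₀)
      (L := L - E * L) <| hshift.congr fun t => by
        simp only [Function.comp_apply, id_eq, ofReal_add]
        linear_combination hsum t
    have h1E : 1 - E ≠ 0 := sub_ne_zero.mpr (Ne.symm hE)
    obtain rfl : b = 0 := (mul_eq_zero.mp hb).resolve_left h1E
    exact ⟨rfl, mul_left_cancel₀ h1E (by linear_combination hc)⟩

noncomputable def cpowPrimitive (μ : ℂ) (u : ℝ) : ℂ :=
  if μ = -1 then (Real.log u : ℂ) else (u : ℂ) ^ (μ + 1) / (μ + 1)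

theorem hasDerivAt_cpowPrimitive (μ : ℂ) {u : ℝ} (hu : 0 < u) :
    HasDerivAt (cpowPrimitive μ) ((u : ℂ) ^ μ) u := by
  unfold cpowPrimitive
  split_ifs with hμ
  · subst hμ
    simpa [cpow_neg_one] using (Real.hasDerivAt_log hu.ne').ofReal_comp
  · exact hasDerivAt_ofReal_cpow_const' hu.ne' hμ

theorem cpowPrimitive_one (μ : ℂ) :
    cpowPrimitive μ 1 = if μ = -1 then 0 else 1 / (μ + 1) := by
  simp [cpowPrimitive]

theorem cpowPrimitive_exp_neg (μ : ℂ) (t : ℝ) :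
    cpowPrimitive μ (rexp (-t))
      = if μ = -1 then -(t : ℂ) else cexp (-(μ + 1) * t) / (μ + 1) := by
  unfold cpowPrimitive
  split_ifs
  · simp
  · rw [ofReal_exp, cpow_def_of_ne_zero (exp_ne_zero _), ← ofReal_exp,
      ← ofReal_log (exp_pos _).le, Real.log_exp]
    push_cast
    ring_nf

theorem integral_Ioo_zero_one_sum_cpow {ι : Type*} (S : Finset ι) (a μ : ι → ℂ)
    (hint : IntegrableOn (fun u : ℝ => ∑ i ∈ S, a i * (u : ℂ) ^ μ i) (Ioo 0 1)) :
    ∫ u in Ioo (0 : ℝ) 1, ∑ i ∈ S, a i * (u : ℂ) ^ μ i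
      = ∑ i ∈ S, if μ i = -1 then 0 else a i / (μ i + 1) := by
  classical
  set P := fun u : ℝ => ∑ i ∈ S, a i * (u : ℂ) ^ μ i
  set G := fun u : ℝ => ∑ i ∈ S, a i * cpowPrimitive (μ i) u
  have hG1 : G 1 = ∑ i ∈ S, if μ i = -1 then 0 else a i / (μ i + 1) := by
    simp only [G, cpowPrimitive_one, mul_ite, mul_zero, mul_one_div]
  have hFTC (t : ℝ) : ∫ u in rexp (-t)..1, P u = G 1 - G (rexp (-t)) := by
    have hpos : uIcc (rexp (-t)) 1 ⊆ Ioi 0 := fun u hu =>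
      lt_of_lt_of_le (lt_min (exp_pos _) one_pos) hu.1
    refine intervalIntegral.integral_eq_sub_of_hasDerivAt (fun u hu => ?_)
      (ContinuousOn.intervalIntegrable <| continuousOn_finsetSum _ fun i _ u hu => ?_)
    · exact HasDerivAt.fun_sum fun i _ => (hasDerivAt_cpowPrimitive (μ i) (hpos hu)).const_mul _
    · exact ((continuousAt_ofReal_cpow_const u (μ i) (Or.inr (hpos hu).ne')).const_mul _)
        |>.continuousWithinAt
  have hlim : Tendsto (fun t : ℝ => ∫ u in rexp (-t)..1, P u) atTop
      (𝓝 (∫ u in Ioo (0 : ℝ) 1, P u)) := by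
    have hcont := intervalIntegral.continuousOn_primitive_interval_left (μ := volume) (b := 1)
      (f := P) (a := 0) (by rwa [uIcc_of_le zero_le_one, integrableOn_Icc_iff_integrableOn_Ioo])
    have h0 := (hcont 0 left_mem_uIcc).tendsto
    rw [intervalIntegral.integral_of_le zero_le_one, integral_Ioc_eq_integral_Ioo] at h0
    refine h0.comp (tendsto_nhdsWithin_iff.mpr ⟨tendsto_exp_neg_atTop_nhds_zero, ?_⟩)
    filter_upwards [eventually_ge_atTop 0] with t ht
    rw [uIcc_of_le zero_le_one]
    exact ⟨(exp_pos _).le, exp_le_one_iff.mpr (neg_nonpos.mpr ht)⟩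
  have hexp : Tendsto (fun t : ℝ =>
      ∑ i ∈ S.filter (μ · ≠ -1), a i / (μ i + 1) * cexp (-(μ i + 1) * t)
        + (-∑ i ∈ S.filter (μ · = -1), a i) * t + 0) atTop
      (𝓝 (G 1 - ∫ u in Ioo (0 : ℝ) 1, P u)) := by
    refine (tendsto_const_nhds.sub hlim).congr fun t => ?_
    rw [hFTC, sub_sub_cancel]
    simp only [G, cpowPrimitive_exp_neg, mul_ite, Finset.sum_ite, add_zero]
    rw [add_comm, neg_mul, Finset.sum_mul, ← Finset.sum_neg_distrib]
    congr 1 <;> refine Finset.sum_congr rfl fun i _ => by ring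
  have := (eq_of_tendsto_sum_exp_add_affine _ _ (fun i hi => ?_) _ hexp).2
  · rw [← hG1]; linear_combination this
  · exact neg_ne_zero.mpr fun h => (Finset.mem_filter.mp hi).2 (eq_neg_of_add_eq_zero_left h)

theorem genInt_eq_of_genIntegrable {f : ℝ → ℂ} {Ω Ω' : Finset ℂ} {c c' : ℂ → ℂ}
    (h : GenIntegrable f Ω c) (h' : GenIntegrable f Ω' c') : genInt f Ω c = genInt f Ω' c' := by
  let D : ℝ → ℂ := fun u =>
    ∑ x ∈ Ω'.disjSum Ω, Sum.elim c' (fun k => -c k) x * (u : ℂ) ^ Sum.elim id id x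
  have hD (u : ℝ) : D u
      = (f u - ∑ k ∈ Ω, c k * (u : ℂ) ^ k) - (f u - ∑ k ∈ Ω', c' k * (u : ℂ) ^ k) := by
    simp only [D, Finset.sum_disjSum, Sum.elim_inl, Sum.elim_inr, id_eq, neg_mul,
      Finset.sum_neg_distrib]
    ring
  have hD_int : IntegrableOn D (Ioo 0 1) :=
    (h.2.sub h'.2).congr_fun (fun u _ => (hD u).symm) measurableSet_Ioo
  have hneg : ∑ k ∈ Ω, (if k = -1 then 0 else -c k / (k + 1))
      = -∑ k ∈ Ω, if k = -1 then 0 else c k / (k + 1) := by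
    rw [← Finset.sum_neg_distrib]
    exact Finset.sum_congr rfl fun k _ => by split_ifs <;> ring
  have hD_integral : ∫ u in Ioo (0 : ℝ) 1, D u
      = (∑ k ∈ Ω', if k = -1 then 0 else c' k / (k + 1))
        - ∑ k ∈ Ω, if k = -1 then 0 else c k / (k + 1) := by
    rw [integral_Ioo_zero_one_sum_cpow _ _ _ hD_int, Finset.sum_disjSum, sub_eq_add_neg, ← hneg]
    -- the two sides differ only in the `Decidable` instances of their `if`s
    rfl
  have hsplit : ∫ r in Ioo (0 : ℝ) 1, (f r - ∑ k ∈ Ω, c k * (r : ℂ) ^ k)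
      = (∫ r in Ioo (0 : ℝ) 1, (f r - ∑ k ∈ Ω', c' k * (r : ℂ) ^ k)) + ∫ u in Ioo (0 : ℝ) 1, D u := by
    rw [← integral_add h'.2 hD_int]
    exact setIntegral_congr_fun measurableSet_Ioo fun u _ => by rw [hD]; ring
  rw [genInt, genInt, hsplit, hD_integral]
  ring

noncomputable def rpowSubst (α : ℝ) (f : ℝ → ℂ) (u : ℝ) : ℂ :=
  ((α * u ^ (α - 1) : ℝ) : ℂ) * f (u ^ α)

/-- `r ^ k dr = α u ^ (α (k + 1) - 1) du` under `r = u ^ α`; `rpowSubstCoeff` undoes this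
exponent map on the coefficients. -/
def rpowSubstExp (α : ℝ) (k : ℂ) : ℂ := α * (k + 1) - 1

noncomputable def rpowSubstCoeff (α : ℝ) (c : ℂ → ℂ) (μ : ℂ) : ℂ := α * c ((μ + 1) / α - 1)

section RpowSubst

variable {α : ℝ}

theorem rpowSubstExp_add_one (α : ℝ) (k : ℂ) : rpowSubstExp α k + 1 = α * (k + 1) :=
  sub_add_cancel _ _

theorem rpowSubstExp_injective (hα : α ≠ 0) : Function.Injective (rpowSubstExp α) := by
  intro k l hkl
  have := congrArg (· + 1) hkl
  simp only [rpowSubstExp_add_one] at this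
  simpa using mul_left_cancel₀ (ofReal_ne_zero.mpr hα) this

theorem rpowSubstExp_eq_neg_one_iff (hα : α ≠ 0) {k : ℂ} : rpowSubstExp α k = -1 ↔ k = -1 :=
  (rpowSubstExp_injective hα).eq_iff' (by simp [rpowSubstExp])

theorem rpowSubstCoeff_rpowSubstExp (hα : α ≠ 0) (c : ℂ → ℂ) (k : ℂ) :
    rpowSubstCoeff α c (rpowSubstExp α k) = α * c k := by
  rw [rpowSubstCoeff, rpowSubstExp_add_one, mul_div_cancel_left₀ _ (ofReal_ne_zero.mpr hα),
    add_sub_cancel_right]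

theorem rpowSubst_cpow (α : ℝ) {u : ℝ} (hu : 0 < u) (k : ℂ) :
    rpowSubst α (fun r => (r : ℂ) ^ k) u = α * (u : ℂ) ^ rpowSubstExp α k := by
  have hu' : (u : ℂ) ≠ 0 := ofReal_ne_zero.mpr hu.ne'
  have hpow : ((u ^ α : ℝ) : ℂ) ^ k = (u : ℂ) ^ ((α : ℂ) * k) := by
    rw [ofReal_cpow hu.le, ← cpow_mul] <;>
      simp [← ofReal_log hu.le, Real.pi_pos, Real.pi_pos.le]
  rw [rpowSubst, hpow, ofReal_mul, ofReal_cpow hu.le, mul_assoc, ← cpow_add _ _ hu',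
    rpowSubstExp]
  push_cast
  ring_nf

theorem rpowSubst_sub_sum_cpow (hα : α ≠ 0) (f : ℝ → ℂ) (Ω : Finset ℂ) (c : ℂ → ℂ) {u : ℝ}
    (hu : 0 < u) :
    rpowSubst α (fun r => f r - ∑ k ∈ Ω, c k * (r : ℂ) ^ k) u
      = rpowSubst α f u - ∑ μ ∈ Ω.image (rpowSubstExp α), rpowSubstCoeff α c μ * (u : ℂ) ^ μ := by
  rw [Finset.sum_image fun k _ l _ hkl => rpowSubstExp_injective hα hkl, rpowSubst, mul_sub,
    Finset.mul_sum]
  congr 1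
  refine Finset.sum_congr rfl fun k _ => ?_
  have := rpowSubst_cpow α hu k
  rw [rpowSubst] at this
  rw [rpowSubstCoeff_rpowSubstExp hα, mul_left_comm, this]
  ring

theorem image_rpow_Ioi_one (hα : 0 < α) : (· ^ α) '' Ioi (1 : ℝ) = Ioi 1 := by
  ext y
  constructor
  · rintro ⟨u, hu, rfl⟩
    exact one_lt_rpow (mem_Ioi.mp hu) hα
  · intro hy
    exact ⟨y ^ α⁻¹, one_lt_rpow (mem_Ioi.mp hy) (inv_pos.mpr hα),
      rpow_inv_rpow (zero_le_one.trans (le_of_lt hy)) hα.ne'⟩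

theorem image_rpow_Ioo_zero_one (hα : 0 < α) : (· ^ α) '' Ioo (0 : ℝ) 1 = Ioo 0 1 := by
  ext y
  constructor
  · rintro ⟨u, hu, rfl⟩
    exact ⟨rpow_pos_of_pos hu.1 _, rpow_lt_one hu.1.le hu.2 hα⟩
  · intro hy
    exact ⟨y ^ α⁻¹, ⟨rpow_pos_of_pos hy.1 _, rpow_lt_one hy.1.le hy.2 (inv_pos.mpr hα)⟩,
      rpow_inv_rpow hy.1.le hα.ne'⟩

variable {s : Set ℝ}

theorem injOn_rpow_const (hα : α ≠ 0) (hs0 : s ⊆ Ioi 0) : InjOn (· ^ α) s :=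
  (rpow_left_injOn hα).mono fun _ hu => le_of_lt (mem_Ioi.mp (hs0 hu))

theorem abs_deriv_smul_eq_rpowSubst (hα : 0 < α) {u : ℝ} (hu : 0 < u) (F : ℝ → ℂ) :
    |α * u ^ (α - 1)| • F (u ^ α) = rpowSubst α F u := by
  rw [abs_of_pos (by positivity), real_smul]
  rfl

theorem setIntegral_image_rpow (hα : 0 < α) (hs : MeasurableSet s) (hs0 : s ⊆ Ioi 0)
    (F : ℝ → ℂ) : ∫ r in (· ^ α) '' s, F r = ∫ u in s, rpowSubst α F u := by
  rw [integral_image_eq_integral_abs_deriv_smul hs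
    (fun u hu => (hasDerivAt_rpow_const (Or.inl (hs0 hu).ne')).hasDerivWithinAt)
    (injOn_rpow_const hα.ne' hs0)]
  exact setIntegral_congr_fun hs fun u hu => abs_deriv_smul_eq_rpowSubst hα (hs0 hu) F

theorem integrableOn_image_rpow_iff (hα : 0 < α) (hs : MeasurableSet s) (hs0 : s ⊆ Ioi 0)
    (F : ℝ → ℂ) : IntegrableOn F ((· ^ α) '' s) ↔ IntegrableOn (rpowSubst α F) s := by
  rw [integrableOn_image_iff_integrableOn_abs_deriv_smul hs
    (fun u hu => (hasDerivAt_rpow_const (Or.inl (hs0 hu).ne')).hasDerivWithinAt)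
    (injOn_rpow_const hα.ne' hs0)]
  exact integrableOn_congr_fun (fun u hu => abs_deriv_smul_eq_rpowSubst hα (hs0 hu) F) hs

theorem genIntegrable_rpowSubst (hα : 0 < α) {f : ℝ → ℂ} {Ω : Finset ℂ} {c : ℂ → ℂ}
    (hf : GenIntegrable f Ω c) :
    GenIntegrable (rpowSubst α f) (Ω.image (rpowSubstExp α)) (rpowSubstCoeff α c) := by
  obtain ⟨hf₁, hf₂⟩ := hf
  constructor
  · rw [← integrableOn_image_rpow_iff (s := Ioi 1) hα measurableSet_Ioi
      (Ioi_subset_Ioi zero_le_one), image_rpow_Ioi_one hα]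
    exact hf₁
  · rw [← image_rpow_Ioo_zero_one hα,
      integrableOn_image_rpow_iff (s := Ioo 0 1) hα measurableSet_Ioo Ioo_subset_Ioi_self] at hf₂
    exact hf₂.congr_fun (fun u hu => rpowSubst_sub_sum_cpow hα.ne' f Ω c hu.1) measurableSet_Ioo

theorem genInt_rpowSubst (hα : 0 < α) (f : ℝ → ℂ) (Ω : Finset ℂ) (c : ℂ → ℂ) :
    genInt (rpowSubst α f) (Ω.image (rpowSubstExp α)) (rpowSubstCoeff α c) = genInt f Ω c := by
  have hα' : (α : ℂ) ≠ 0 := ofReal_ne_zero.mpr hα.ne'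
  have hconst : ∑ μ ∈ Ω.image (rpowSubstExp α),
        (if μ = -1 then 0 else rpowSubstCoeff α c μ / (μ + 1))
      = ∑ k ∈ Ω, if k = -1 then 0 else c k / (k + 1) := by
    rw [Finset.sum_image fun k _ l _ hkl => rpowSubstExp_injective hα.ne' hkl]
    refine Finset.sum_congr rfl fun k _ => ?_
    simp only [rpowSubstExp_eq_neg_one_iff hα.ne', rpowSubstCoeff_rpowSubstExp hα.ne',
      rpowSubstExp_add_one, mul_div_mul_left _ _ hα']
  have hIoo := setIntegral_image_rpow (s := Ioo 0 1) hα measurableSet_Ioo Ioo_subset_Ioi_self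
    (fun r => f r - ∑ k ∈ Ω, c k * (r : ℂ) ^ k)
  rw [image_rpow_Ioo_zero_one hα, setIntegral_congr_fun measurableSet_Ioo
    fun u hu => rpowSubst_sub_sum_cpow hα.ne' f Ω c hu.1] at hIoo
  have hIoi := setIntegral_image_rpow (s := Ioi 1) hα measurableSet_Ioi
    (Ioi_subset_Ioi zero_le_one) f
  rw [image_rpow_Ioi_one hα] at hIoi
  rw [genInt, genInt, hconst, hIoo, hIoi]

end RpowSubst

theorem genInt_power_substitution (f : ℝ → ℂ) (Ω : Finset ℂ) (c : ℂ → ℂ)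
    (α : ℝ) (hα : 0 < α) (hf : GenIntegrable f Ω c)
    (Ω' : Finset ℂ) (c' : ℂ → ℂ)
    (hg : GenIntegrable (fun u => ((α * u ^ (α - 1) : ℝ) : ℂ) * f (u ^ α)) Ω' c') :
    genInt f Ω c
      = genInt (fun u => ((α * u ^ (α - 1) : ℝ) : ℂ) * f (u ^ α)) Ω' c' :=
  (genInt_rpowSubst hα f Ω c).symm.trans
    (genInt_eq_of_genIntegrable (genIntegrable_rpowSubst hα hf) hg)
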